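/- Let S be a division ring, σ injective, δ a left σ-derivation, and f ∈ S[t;σ,δ] monic of degree m ≥ 2 such that S_f is a finite-dimensional vector space over its center S_0. Then S_f is a division algebra if and only if f is irreducible in S[t;σ,δ]. -/

import Mathlib

/-!
If `f = g * h` with `deg g, deg h < m`, then `g ∘ h = 0` in `S_f`, so `S_f` is not a division
algebra.  Conversely, let `f` be irreducible.  Since `σ` is injective, one can divide on the right
by any nonzero polynomial, so left ideals of `R = S[t;σ,δ]` are principal.  If `a ∘ b = 0` with
`a, b ≠ 0`, the left ideal `{x | x b ∈ R f}` contains `a`, so its generator `g` has degree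
`≤ deg a < m`; but `x ↦ x b mod f` maps `{deg < deg g}` bijectively onto `S_f` (onto because
`R b + R f = R` by irreducibility), and comparing dimensions as left `S`-spaces gives `deg g = m`.
So `S_f` has no zero divisors.  Right multiplications are left `S`-linear, hence bijective.
Left multiplications commute with the centroid of `S_f`, which is a field because each of its
nonzero elements is a right multiplication; `S_f` is finite-dimensional over it since it is so
over `S₀`, so left multiplications are bijective too.
-/

/-- An abstract presentation of the skew polynomial ring `S[t;σ,δ]`:
a ring `R` together with an embedding of `S`, a variable `t` satisfying the
commutation rule `t·a = σ(a)·t + δ(a)`, such that the `t^i` form a basis of `R`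
as a left `S`-module (encoded by the coefficient equivalence). -/
structure SkewPolyRing (S : Type*) (R : Type*) [Ring S] [Ring R]
    (σ : S →+* S) (δ : S →+ S) : Type _ where
  ι : S →+* R
  t : R
  t_comm : ∀ a : S, t * ι a = ι (σ a) * t + ι (δ a)
  coeff : R ≃+ (ℕ →₀ S)
  coeff_symm : ∀ p : ℕ →₀ S, coeff.symm p = p.sum fun i a => ι a * t ^ i

namespace SkewPolyRing

variable {S R : Type*} [Ring S] [Ring R] {σ : S →+* S} {δ : S →+ S}

/-- `g` has degree `< m`. -/
def degLT (P : SkewPolyRing S R σ δ) (g : R) (m : ℕ) : Prop :=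
  ∀ i, m ≤ i → P.coeff g i = 0

/-- The degree of a skew polynomial (with `deg 0 = 0` by convention). -/
noncomputable def deg (P : SkewPolyRing S R σ δ) (g : R) : ℕ :=
  (P.coeff g).support.sup id

/-- `f` is monic of degree `m`. -/
def MonicDeg (P : SkewPolyRing S R σ δ) (f : R) (m : ℕ) : Prop :=
  P.coeff f m = 1 ∧ ∀ i, m < i → P.coeff f i = 0

/-- `modr` computes a remainder of right division by `f`. -/
def IsModr (P : SkewPolyRing S R σ δ) (f : R) (m : ℕ) (modr : R → R) : Prop :=
  ∀ g : R, P.degLT (modr g) m ∧ ∃ q : R, g = q * f + modr g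

end SkewPolyRing

namespace SkewPolyRing

/-- The center `S₀` of the Petit algebra `S_f`: elements of degree `< m` that commute and
associate with all elements of `S_f` (where the product is `x ∘ y = modr (x·y)`). -/
def petitCenter {S R : Type*} [Ring S] [Ring R] {σ : S →+* S} {δ : S →+ S}
    (P : SkewPolyRing S R σ δ) (m : ℕ) (modr : R → R) : Set R :=
  {z | P.degLT z m ∧ (∀ x, P.degLT x m → modr (z * x) = modr (x * z)) ∧
    ∀ x y, P.degLT x m → P.degLT y m →
      modr (modr (z * x) * y) = modr (z * modr (x * y)) ∧
      modr (modr (x * z) * y) = modr (x * modr (z * y)) ∧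
      modr (modr (x * y) * z) = modr (x * modr (y * z))}

end SkewPolyRing

namespace CentroidHom

variable {α : Type*}

theorem apply_eq_mul_apply_one [NonAssocSemiring α] (T : CentroidHom α) (a : α) :
    T a = a * T 1 := by
  rw [← map_mul_left, mul_one]

theorem mul_comm_of_unital [NonAssocSemiring α] (T U : CentroidHom α) : T * U = U * T :=
  ext fun a => by simpa only [mul_one, mul_apply, Function.comp_apply] using comp_mul_comm T U a 1

noncomputable def invOfBijective [NonAssocSemiring α] (T : CentroidHom α)
    (hT : Function.Bijective T) : CentroidHom α where
  toFun := (Equiv.ofBijective T hT).symm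
  map_zero' := by
    rw [Equiv.symm_apply_eq, Equiv.ofBijective_apply, map_zero]
  map_add' a b := by
    rw [Equiv.symm_apply_eq, Equiv.ofBijective_apply, map_add,
      Equiv.ofBijective_apply_symm_apply T hT, Equiv.ofBijective_apply_symm_apply T hT]
  map_mul_left' a b := by
    rw [Equiv.symm_apply_eq, Equiv.ofBijective_apply, map_mul_left,
      Equiv.ofBijective_apply_symm_apply T hT]
  map_mul_right' a b := by
    rw [Equiv.symm_apply_eq, Equiv.ofBijective_apply, map_mul_right,
      Equiv.ofBijective_apply_symm_apply T hT]

theorem mul_invOfBijective [NonAssocSemiring α] (T : CentroidHom α) (hT : Function.Bijective T) :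
    T * T.invOfBijective hT = 1 :=
  ext (Equiv.ofBijective T hT).apply_symm_apply

theorem isField_of_bijective_mul_right [NonAssocRing α] [Nontrivial α]
    (h : ∀ c : α, c ≠ 0 → Function.Bijective (· * c)) : IsField (CentroidHom α) where
  exists_pair_ne := ⟨0, 1, fun h01 => zero_ne_one (congrArg (· 1) h01 : (0 : α) = 1)⟩
  mul_comm := mul_comm_of_unital
  mul_inv_cancel {T} hT := by
    have hT1 : T 1 ≠ 0 := fun h0 =>
      hT (ext fun a => by rw [apply_eq_mul_apply_one, h0, mul_zero, zero_apply])
    have hbij : Function.Bijective T := by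
      convert h _ hT1 using 1
      exact funext (apply_eq_mul_apply_one T)
    exact ⟨_, T.mul_invOfBijective hbij⟩

end CentroidHom

theorem mul_left_surjective_of_finite_centroidHom {A : Type*} [NonAssocRing A]
    [Module.Finite (CentroidHom A) A] (h : ∀ c : A, c ≠ 0 → Function.Bijective (· * c))
    {a : A} (ha : a ≠ 0) : Function.Surjective (a * ·) := by
  have : Nontrivial A := nontrivial_of_ne a 0 ha
  let _ : Field (CentroidHom A) := (CentroidHom.isField_of_bijective_mul_right h).toField
  have hinj : Function.Injective (LinearMap.mulLeft (CentroidHom A) a) := by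
    rw [← LinearMap.ker_eq_bot, LinearMap.ker_eq_bot']
    intro x hx
    by_contra hx0
    exact ha ((h x hx0).1 (by simpa using hx))
  exact LinearMap.injective_iff_surjective.mp hinj

namespace SkewPolyRing

section Ring

variable {S R : Type*} [Ring S] [Ring R] {σ : S →+* S} {δ : S →+ S}
  (P : SkewPolyRing S R σ δ)

theorem coeff_ι_mul_t_pow (a : S) (i : ℕ) :
    P.coeff (P.ι a * P.t ^ i) = Finsupp.single i a := by
  rw [← P.coeff.apply_symm_apply (Finsupp.single i a), P.coeff_symm,
    Finsupp.sum_single_index (by rw [map_zero, zero_mul])]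

theorem coeff_one : P.coeff 1 = Finsupp.single 0 1 := by
  simpa using P.coeff_ι_mul_t_pow 1 0

include P in
theorem nontrivial [Nontrivial S] : Nontrivial R :=
  ⟨⟨1, 0, fun h => by simpa [h, eq_comm] using P.coeff_one⟩⟩

theorem induction_on {p : R → Prop} (g : R) (zero : p 0)
    (add : ∀ g h, p g → p h → p (g + h))
    (monomial : ∀ (a : S) (i : ℕ), p (P.ι a * P.t ^ i)) : p g := by
  obtain ⟨c, rfl⟩ := P.coeff.symm.surjective g
  induction c using Finsupp.induction_linear with
  | zero => simpa using zero
  | add c c' hc hc' => simpa using add _ _ hc hc'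
  | single i a => simpa [P.coeff_symm, Finsupp.sum_single_index] using monomial a i

theorem coeff_ι_mul (s : S) (g : R) (j : ℕ) : P.coeff (P.ι s * g) j = s * P.coeff g j := by
  induction g using P.induction_on with
  | zero => simp
  | add g h hg hh => simp [mul_add, hg, hh]
  | monomial a i =>
    rw [← mul_assoc, ← map_mul, coeff_ι_mul_t_pow, coeff_ι_mul_t_pow, Finsupp.single_apply,
      Finsupp.single_apply]
    split_ifs <;> simp

theorem coeff_t_mul_succ (g : R) (j : ℕ) :
    P.coeff (P.t * g) (j + 1) = σ (P.coeff g j) + δ (P.coeff g (j + 1)) := by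
  induction g using P.induction_on with
  | zero => simp
  | add g h hg hh => simp only [mul_add, map_add, Finsupp.add_apply, hg, hh]; abel
  | monomial a i =>
    rw [← mul_assoc, P.t_comm, add_mul, mul_assoc, ← pow_succ', map_add P.coeff,
      Finsupp.add_apply, coeff_ι_mul_t_pow, coeff_ι_mul_t_pow, coeff_ι_mul_t_pow]
    simp only [Finsupp.single_apply, Nat.add_right_cancel_iff]
    split_ifs <;> simp_all

theorem degLT_zero (n : ℕ) : P.degLT 0 n := fun i _ => by simp

theorem degLT_add {g h : R} {n : ℕ} (hg : P.degLT g n) (hh : P.degLT h n) :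
    P.degLT (g + h) n := fun i hi => by simp [hg i hi, hh i hi]

theorem degLT_neg {g : R} {n : ℕ} (hg : P.degLT g n) : P.degLT (-g) n :=
  fun i hi => by simp [hg i hi]

theorem degLT_sub {g h : R} {n : ℕ} (hg : P.degLT g n) (hh : P.degLT h n) :
    P.degLT (g - h) n := fun i hi => by simp [hg i hi, hh i hi]

theorem degLT_sum {ι : Type*} (s : Finset ι) {g : ι → R} {n : ℕ}
    (hg : ∀ i ∈ s, P.degLT (g i) n) : P.degLT (∑ i ∈ s, g i) n := fun j hj => by
  rw [map_sum, Finset.sum_apply']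
  exact Finset.sum_eq_zero fun i hi => hg i hi j hj

theorem degLT_mono {g : R} {n n' : ℕ} (hg : P.degLT g n) (h : n ≤ n') : P.degLT g n' :=
  fun i hi => hg i (h.trans hi)

theorem degLT_ι_mul (s : S) {g : R} {n : ℕ} (hg : P.degLT g n) : P.degLT (P.ι s * g) n :=
  fun i hi => by rw [coeff_ι_mul, hg i hi, mul_zero]

theorem degLT_one {n : ℕ} (hn : 0 < n) : P.degLT 1 n := fun i hi => by
  rw [coeff_one, Finsupp.single_apply, if_neg (by omega)]

theorem eq_ι_of_degLT_one {g : R} (hg : P.degLT g 1) : g = P.ι (P.coeff g 0) := by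
  refine P.coeff.injective (Finsupp.ext fun i => ?_)
  have := P.coeff_ι_mul_t_pow (P.coeff g 0) 0
  rw [pow_zero, mul_one] at this
  rw [this, Finsupp.single_apply]
  split_ifs with h
  · rw [h]
  · exact hg i (by omega)

theorem sum_monomials (g : R) :
    ∑ i ∈ (P.coeff g).support, P.ι (P.coeff g i) * P.t ^ i = g := by
  conv_rhs => rw [← P.coeff.symm_apply_apply g, P.coeff_symm]
  rfl

theorem degLT_t_mul {g : R} {n : ℕ} (hg : P.degLT g n) : P.degLT (P.t * g) (n + 1)
  | 0, h => absurd h (by omega)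
  | j + 1, h => by
    rw [coeff_t_mul_succ, hg j (by omega), hg (j + 1) (by omega), map_zero, map_zero, add_zero]

theorem coeff_t_mul_of_degLT {g : R} {n : ℕ} (hg : P.degLT g (n + 1)) :
    P.coeff (P.t * g) (n + 1) = σ (P.coeff g n) := by
  rw [coeff_t_mul_succ, hg (n + 1) le_rfl, map_zero, add_zero]

theorem degLT_t_pow_mul {g : R} {n : ℕ} (hg : P.degLT g n) (k : ℕ) :
    P.degLT (P.t ^ k * g) (n + k) := by
  induction k with
  | zero => simpa using hg
  | succ k ih => rw [pow_succ', mul_assoc]; exact P.degLT_t_mul ih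

theorem coeff_t_pow_mul_of_degLT {g : R} {n : ℕ} (hg : P.degLT g (n + 1)) (k : ℕ) :
    P.coeff (P.t ^ k * g) (n + k) = (σ ^ k) (P.coeff g n) := by
  induction k with
  | zero => simp
  | succ k ih =>
    rw [pow_succ', mul_assoc, ← add_assoc,
      P.coeff_t_mul_of_degLT (P.degLT_mono (P.degLT_t_pow_mul hg k) (by omega)), ih, pow_succ']
    rfl

theorem degLT_mul {g h : R} {p q : ℕ} (hg : P.degLT g p) (hh : P.degLT h (q + 1)) :
    P.degLT (g * h) (p + q) := by
  rw [← P.sum_monomials g, Finset.sum_mul]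
  refine P.degLT_sum _ fun i hi => ?_
  have hip : i < p := by
    by_contra h
    exact Finsupp.mem_support_iff.mp hi (hg i (by omega))
  rw [mul_assoc]
  exact P.degLT_ι_mul _ (P.degLT_mono (P.degLT_t_pow_mul hh i) (by omega))

theorem coeff_mul_add {g h : R} {p q : ℕ} (hg : P.degLT g (p + 1)) (hh : P.degLT h (q + 1)) :
    P.coeff (g * h) (p + q) = P.coeff g p * (σ ^ p) (P.coeff h q) := by
  set g' := g - P.ι (P.coeff g p) * P.t ^ p
  have hg' : P.degLT g' p := fun i hi => by
    rw [map_sub P.coeff, Finsupp.sub_apply, coeff_ι_mul_t_pow, Finsupp.single_apply]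
    rcases hi.eq_or_lt with rfl | hlt
    · rw [if_pos rfl, sub_self]
    · rw [if_neg hlt.ne, hg i hlt, sub_zero]
  have hsplit : g * h = P.ι (P.coeff g p) * (P.t ^ p * h) + g' * h := by
    simp only [g', sub_mul, mul_assoc]; abel
  rw [hsplit, map_add P.coeff, Finsupp.add_apply, coeff_ι_mul, add_comm p q,
    P.coeff_t_pow_mul_of_degLT hh, P.degLT_mul hg' hh _ (by omega), add_zero]

theorem le_deg_of_coeff_ne_zero {g : R} {n : ℕ} (h : P.coeff g n ≠ 0) : n ≤ P.deg g :=
  Finset.le_sup (f := id) (Finsupp.mem_support_iff.mpr h)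

theorem degLT_deg_add_one (g : R) : P.degLT g (P.deg g + 1) := fun i hi => by
  by_contra h
  have := P.le_deg_of_coeff_ne_zero h
  omega

theorem coeff_deg_ne_zero {g : R} (hg : g ≠ 0) : P.coeff g (P.deg g) ≠ 0 := by
  have hne : (P.coeff g).support.Nonempty :=
    Finsupp.support_nonempty_iff.mpr ((map_ne_zero_iff _ P.coeff.injective).mpr hg)
  obtain ⟨i, hi, hdeg⟩ := Finset.exists_mem_eq_sup _ hne id
  rw [deg, hdeg]
  exact Finsupp.mem_support_iff.mp hi

theorem deg_lt_of_degLT {g : R} {n : ℕ} (hg : g ≠ 0) (h : P.degLT g n) : P.deg g < n := by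
  by_contra hn
  exact P.coeff_deg_ne_zero hg (h _ (by omega))

def ofCoeffs {n : ℕ} (v : Fin n → S) : R :=
  ∑ i, P.ι (v i) * P.t ^ (i : ℕ)

theorem coeff_ofCoeffs {n : ℕ} (v : Fin n → S) :
    P.coeff (P.ofCoeffs v) = ∑ i : Fin n, Finsupp.single (i : ℕ) (v i) := by
  simp only [ofCoeffs, map_sum, coeff_ι_mul_t_pow]

theorem coeff_ofCoeffs_of_lt {n : ℕ} (v : Fin n → S) {j : ℕ} (hj : j < n) :
    P.coeff (P.ofCoeffs v) j = v ⟨j, hj⟩ := by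
  rw [coeff_ofCoeffs, Finsupp.finsetSum_apply, Finset.sum_eq_single ⟨j, hj⟩]
  · exact Finsupp.single_eq_same
  · exact fun i _ hi => Finsupp.single_eq_of_ne (fun h => hi (Fin.ext h.symm))
  · exact fun h => absurd (Finset.mem_univ _) h

theorem degLT_ofCoeffs {n : ℕ} (v : Fin n → S) : P.degLT (P.ofCoeffs v) n := fun j hj => by
  rw [coeff_ofCoeffs, Finsupp.finsetSum_apply]
  exact Finset.sum_eq_zero fun i _ => Finsupp.single_eq_of_ne (by omega)

theorem eq_of_degLT_of_coeff_eq {x y : R} {n : ℕ} (hx : P.degLT x n) (hy : P.degLT y n)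
    (h : ∀ j < n, P.coeff x j = P.coeff y j) : x = y := by
  refine P.coeff.injective (Finsupp.ext fun j => ?_)
  by_cases hj : j < n
  · exact h j hj
  · rw [hx j (by omega), hy j (by omega)]

theorem ofCoeffs_coeff {x : R} {n : ℕ} (hx : P.degLT x n) :
    P.ofCoeffs (fun j : Fin n => P.coeff x j) = x :=
  P.eq_of_degLT_of_coeff_eq (P.degLT_ofCoeffs _) hx fun _ hj => P.coeff_ofCoeffs_of_lt _ hj

theorem ofCoeffs_add {n : ℕ} (v w : Fin n → S) :
    P.ofCoeffs (v + w) = P.ofCoeffs v + P.ofCoeffs w := by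
  simp only [ofCoeffs, Pi.add_apply, map_add, add_mul, Finset.sum_add_distrib]

theorem ofCoeffs_smul {n : ℕ} (s : S) (v : Fin n → S) :
    P.ofCoeffs (s • v) = P.ι s * P.ofCoeffs v := by
  simp only [ofCoeffs, Pi.smul_apply, smul_eq_mul, map_mul, mul_assoc, Finset.mul_sum]

noncomputable def coordLinearMap (φ : R →+ R) (hφ : ∀ s x, φ (P.ι s * x) = P.ι s * φ x)
    (n k : ℕ) : (Fin n → S) →ₗ[S] (Fin k → S) where
  toFun v j := P.coeff (φ (P.ofCoeffs v)) j
  map_add' v w := by ext j; simp [ofCoeffs_add]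
  map_smul' s v := by ext j; simp [ofCoeffs_smul, hφ, coeff_ι_mul]

theorem coordLinearMap_injective (φ : R →+ R) (hφ : ∀ s x, φ (P.ι s * x) = P.ι s * φ x)
    {n k : ℕ} (hmaps : ∀ x, P.degLT x n → P.degLT (φ x) k)
    (hinj : ∀ x, P.degLT x n → φ x = 0 → x = 0) :
    Function.Injective (P.coordLinearMap φ hφ n k) := by
  rw [← LinearMap.ker_eq_bot, LinearMap.ker_eq_bot']
  intro v hv
  have hφv : φ (P.ofCoeffs v) = 0 :=
    P.eq_of_degLT_of_coeff_eq (hmaps _ (P.degLT_ofCoeffs v)) (P.degLT_zero k)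
      fun j hj => by rw [map_zero]; exact congrFun hv ⟨j, hj⟩
  have hv0 := hinj _ (P.degLT_ofCoeffs v) hφv
  ext j
  simpa [hv0] using (P.coeff_ofCoeffs_of_lt v j.2).symm

def degLTSubgroup (n : ℕ) : AddSubgroup R where
  carrier := {x | P.degLT x n}
  add_mem' := P.degLT_add
  zero_mem' := P.degLT_zero n
  neg_mem' := P.degLT_neg

end Ring

section DivisionRing

variable {S R : Type*} [DivisionRing S] [Ring R] {σ : S →+* S} {δ : S →+ S}
  (P : SkewPolyRing S R σ δ) (hσ : Function.Injective σ)

include hσ in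
theorem coeff_mul_deg_add_deg_ne_zero {g h : R} (hg : g ≠ 0) (hh : h ≠ 0) :
    P.coeff (g * h) (P.deg g + P.deg h) ≠ 0 := by
  rw [P.coeff_mul_add (P.degLT_deg_add_one g) (P.degLT_deg_add_one h)]
  refine mul_ne_zero (P.coeff_deg_ne_zero hg) ?_
  rw [map_ne_zero_iff _ (by rw [RingHom.coe_pow]; exact hσ.iterate _)]
  exact P.coeff_deg_ne_zero hh

include P hσ in
theorem mul_ne_zero_of_ne_zero {g h : R} (hg : g ≠ 0) (hh : h ≠ 0) : g * h ≠ 0 := fun h0 => by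
  simpa [h0] using P.coeff_mul_deg_add_deg_ne_zero hσ hg hh

include hσ in
theorem deg_mul {g h : R} (hg : g ≠ 0) (hh : h ≠ 0) :
    P.deg (g * h) = P.deg g + P.deg h := by
  have hle := P.deg_lt_of_degLT (P.mul_ne_zero_of_ne_zero hσ hg hh)
    (P.degLT_mul (P.degLT_deg_add_one g) (P.degLT_deg_add_one h))
  have hge := P.le_deg_of_coeff_ne_zero (P.coeff_mul_deg_add_deg_ne_zero hσ hg hh)
  omega

include hσ in
theorem exists_eq_mul_add {g : R} (hg : g ≠ 0) (x : R) :
    ∃ q r, x = q * g + r ∧ P.degLT r (P.deg g) := by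
  obtain ⟨N, hN⟩ : ∃ N, P.degLT x N := ⟨_, P.degLT_deg_add_one x⟩
  induction N generalizing x with
  | zero => exact ⟨0, x, by rw [zero_mul, zero_add], P.degLT_mono hN (Nat.zero_le _)⟩
  | succ N ih =>
    by_cases hNg : N < P.deg g
    · exact ⟨0, x, by rw [zero_mul, zero_add], P.degLT_mono hN hNg⟩
    obtain ⟨k, rfl⟩ : ∃ k, N = P.deg g + k := ⟨N - P.deg g, by omega⟩
    have hg' := P.degLT_deg_add_one g
    have hlead : (σ ^ k) (P.coeff g (P.deg g)) ≠ 0 := by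
      rw [map_ne_zero_iff _ (by rw [RingHom.coe_pow]; exact hσ.iterate k)]
      exact P.coeff_deg_ne_zero hg
    -- subtracting `e t^k g` kills the coefficient of `x` in degree `deg g + k`
    set e := P.coeff x (P.deg g + k) * ((σ ^ k) (P.coeff g (P.deg g)))⁻¹
    have hx' : P.degLT (x - P.ι e * P.t ^ k * g) (P.deg g + k) := fun i hi => by
      rw [map_sub P.coeff, Finsupp.sub_apply, mul_assoc, coeff_ι_mul]
      rcases hi.eq_or_lt with rfl | hlt
      · rw [P.coeff_t_pow_mul_of_degLT hg', mul_assoc, inv_mul_cancel₀ hlead, mul_one, sub_self]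
      · rw [hN i hlt, P.degLT_t_pow_mul hg' k i (by omega), mul_zero, sub_zero]
    obtain ⟨q, r, hqr, hr⟩ := ih _ hx'
    refine ⟨q + P.ι e * P.t ^ k, r, ?_, hr⟩
    rw [add_mul, add_right_comm, ← hqr, sub_add_cancel]

include hσ in
theorem exists_generator (I : Submodule R R) (hI : I ≠ ⊥) :
    ∃ g ∈ I, g ≠ 0 ∧ (∀ x ∈ I, P.degLT x (P.deg g) → x = 0) ∧
      ∀ x ∈ I, ∃ q, x = q * g := by
  classical
  obtain ⟨x₀, hx₀, hx₀0⟩ := (Submodule.ne_bot_iff I).mp hI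
  have hex : ∃ n, ∃ g ∈ I, g ≠ 0 ∧ P.deg g = n := ⟨_, x₀, hx₀, hx₀0, rfl⟩
  obtain ⟨g, hgI, hg0, hgdeg⟩ := Nat.find_spec hex
  have hmin : ∀ x ∈ I, P.degLT x (P.deg g) → x = 0 := fun x hx hxd => by
    by_contra hx0
    exact Nat.find_min hex (hgdeg ▸ P.deg_lt_of_degLT hx0 hxd) ⟨x, hx, hx0, rfl⟩
  refine ⟨g, hgI, hg0, hmin, fun x hx => ?_⟩
  obtain ⟨q, r, rfl, hr⟩ := P.exists_eq_mul_add hσ hg0 x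
  have hrI : r ∈ I := by simpa using I.sub_mem hx (I.smul_mem q hgI)
  exact ⟨q, by rw [hmin r hrI hr, add_zero]⟩

theorem deg_le_of_generator {I : Submodule R R} {g x : R}
    (hmin : ∀ x ∈ I, P.degLT x (P.deg g) → x = 0) (hx : x ∈ I) (hx0 : x ≠ 0) :
    P.deg g ≤ P.deg x := by
  by_contra h
  exact hx0 (hmin x hx (P.degLT_mono (P.degLT_deg_add_one x) (by omega)))

theorem eq_of_bijOn_degLT (φ : R →+ R) (hφ : ∀ s x, φ (P.ι s * x) = P.ι s * φ x)
    {n k : ℕ} (hmaps : ∀ x, P.degLT x n → P.degLT (φ x) k)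
    (hinj : ∀ x, P.degLT x n → φ x = 0 → x = 0)
    (hsurj : ∀ y, P.degLT y k → ∃ x, P.degLT x n ∧ φ x = y) : n = k := by
  have hbij : Function.Bijective (P.coordLinearMap φ hφ n k) := by
    refine ⟨P.coordLinearMap_injective φ hφ hmaps hinj, fun w => ?_⟩
    obtain ⟨x, hx, hφx⟩ := hsurj _ (P.degLT_ofCoeffs w)
    refine ⟨fun j => P.coeff x j, funext fun j => ?_⟩
    simp only [coordLinearMap, LinearMap.coe_mk, AddHom.coe_mk, P.ofCoeffs_coeff hx, hφx]
    exact P.coeff_ofCoeffs_of_lt w j.2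
  simpa using (LinearEquiv.ofBijective _ hbij).finrank_eq

theorem surjOn_degLT_of_injOn (φ : R →+ R) (hφ : ∀ s x, φ (P.ι s * x) = P.ι s * φ x)
    {n : ℕ} (hmaps : ∀ x, P.degLT x n → P.degLT (φ x) n)
    (hinj : ∀ x, P.degLT x n → φ x = 0 → x = 0)
    {y : R} (hy : P.degLT y n) : ∃ x, P.degLT x n ∧ φ x = y := by
  obtain ⟨v, hv⟩ := LinearMap.injective_iff_surjective.mp
    (P.coordLinearMap_injective φ hφ hmaps hinj) fun j => P.coeff y j
  refine ⟨P.ofCoeffs v, P.degLT_ofCoeffs v,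
    P.eq_of_degLT_of_coeff_eq (hmaps _ (P.degLT_ofCoeffs v)) hy fun j hj => ?_⟩
  exact congrFun hv ⟨j, hj⟩

variable {f : R} {m : ℕ}

theorem ne_zero_of_monicDeg (hf : P.MonicDeg f m) : f ≠ 0 := fun h => by
  simpa [h] using hf.1

theorem deg_eq_of_monicDeg (hf : P.MonicDeg f m) : P.deg f = m := by
  have hle := P.deg_lt_of_degLT (P.ne_zero_of_monicDeg hf) hf.2
  have hge := P.le_deg_of_coeff_ne_zero (hf.1 ▸ one_ne_zero)
  omega

include hσ in
theorem eq_zero_of_degLT_mul_monic (hf : P.MonicDeg f m) {q : R} (h : P.degLT (q * f) m) :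
    q = 0 := by
  by_contra hq
  have hf0 := P.ne_zero_of_monicDeg hf
  have := P.deg_lt_of_degLT (P.mul_ne_zero_of_ne_zero hσ hq hf0) h
  rw [P.deg_mul hσ hq hf0, P.deg_eq_of_monicDeg hf] at this
  omega

include hσ in
theorem not_isUnit_of_monicDeg (hf : P.MonicDeg f m) (hm : 0 < m) : ¬IsUnit f := by
  have := P.nontrivial
  rintro ⟨u, rfl⟩
  refine u⁻¹.ne_zero (P.eq_zero_of_degLT_mul_monic hσ hf ?_)
  rw [u.inv_mul]
  exact P.degLT_one hm

variable (hf : P.MonicDeg f m) {modr : R → R} (hmodr : P.IsModr f m modr)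
  (hirr : ¬∃ g h : R, P.degLT g m ∧ P.degLT h m ∧ f = g * h)

section Modr

include hσ hf hmodr

theorem modr_eq {g q r : R} (h : g = q * f + r) (hr : P.degLT r m) : modr g = r := by
  obtain ⟨q', hq'⟩ := (hmodr g).2
  have hdiff : P.degLT ((q - q') * f) m := by
    rw [sub_mul, eq_sub_of_add_eq h.symm, eq_sub_of_add_eq hq'.symm, sub_sub_sub_cancel_left]
    exact P.degLT_sub (hmodr g).1 hr
  obtain rfl : q = q' := sub_eq_zero.mp (P.eq_zero_of_degLT_mul_monic hσ hf hdiff)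
  exact add_left_cancel (hq'.symm.trans h)

theorem modr_eq_zero_iff {g : R} : modr g = 0 ↔ ∃ w, w * f = g := by
  refine ⟨fun h => ?_, fun ⟨w, hw⟩ =>
    P.modr_eq hσ hf hmodr (by rw [← hw, add_zero]) (P.degLT_zero m)⟩
  obtain ⟨q, hq⟩ := (hmodr g).2
  exact ⟨q, by rw [hq, h, add_zero]⟩

theorem modr_self : modr f = 0 :=
  (P.modr_eq_zero_iff hσ hf hmodr).mpr ⟨1, one_mul f⟩

theorem modr_of_degLT {g : R} (hg : P.degLT g m) : modr g = g :=
  P.modr_eq hσ hf hmodr (q := 0) (by rw [zero_mul, zero_add]) hg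

theorem modr_add (g h : R) : modr (g + h) = modr g + modr h := by
  obtain ⟨q, hq⟩ := (hmodr g).2
  obtain ⟨q', hq'⟩ := (hmodr h).2
  refine P.modr_eq hσ hf hmodr (q := q + q') ?_ (P.degLT_add (hmodr g).1 (hmodr h).1)
  rw [add_mul]
  conv_lhs => rw [hq, hq']
  abel

theorem modr_ι_mul (s : S) (g : R) : modr (P.ι s * g) = P.ι s * modr g := by
  obtain ⟨q, hq⟩ := (hmodr g).2
  refine P.modr_eq hσ hf hmodr (q := P.ι s * q) ?_ (P.degLT_ι_mul s (hmodr g).1)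
  conv_lhs => rw [hq]
  rw [mul_add, mul_assoc]

def modrHom : R →+ R :=
  AddMonoidHom.mk' modr (P.modr_add hσ hf hmodr)

theorem modrHom_apply (g : R) : P.modrHom hσ hf hmodr g = modr g := rfl

theorem modr_zero : modr 0 = 0 :=
  (P.modrHom hσ hf hmodr).map_zero

theorem modr_sub (g h : R) : modr (g - h) = modr g - modr h :=
  (P.modrHom hσ hf hmodr).map_sub g h

end Modr

include hσ hf hirr in
theorem exists_mul_add_mul_eq_one {b : R} (hb : P.degLT b m) (hb0 : b ≠ 0) :
    ∃ u w, u * b + w * f = 1 := by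
  have hbI : b ∈ Submodule.span R {b, f} := Submodule.subset_span (by simp)
  obtain ⟨g, hgI, hg0, hmin, hgen⟩ := P.exists_generator hσ (Submodule.span R {b, f})
    ((Submodule.ne_bot_iff _).mpr ⟨b, hbI, hb0⟩)
  have hgm : P.deg g < m :=
    (P.deg_le_of_generator hmin hbI hb0).trans_lt (P.deg_lt_of_degLT hb0 hb)
  obtain ⟨q, hq⟩ := hgen f (Submodule.subset_span (by simp))
  rcases Nat.eq_zero_or_pos (P.deg g) with hg1 | hgpos
  · obtain ⟨c, hgc⟩ : ∃ c, g = P.ι c :=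
      ⟨_, P.eq_ι_of_degLT_one (by simpa [hg1] using P.degLT_deg_add_one g)⟩
    have hc : c ≠ 0 := by rintro rfl; exact hg0 (by rw [hgc, map_zero])
    have h1 : P.ι c⁻¹ * g = 1 := by rw [hgc, ← map_mul, inv_mul_cancel₀ hc, map_one]
    simpa [h1] using Submodule.mem_span_pair.mp (Submodule.smul_mem _ (P.ι c⁻¹) hgI)
  · have hq0 : q ≠ 0 := by rintro rfl; exact P.ne_zero_of_monicDeg hf (by rw [hq, zero_mul])
    have hdeg := P.deg_mul hσ hq0 hg0
    rw [← hq, P.deg_eq_of_monicDeg hf] at hdeg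
    exact (hirr ⟨q, g, P.degLT_mono (P.degLT_deg_add_one q) (by omega),
      P.degLT_mono (P.degLT_deg_add_one g) (by omega), hq⟩).elim

section Irreducible

include hσ hf hmodr hirr

theorem modr_mul_ne_zero {a b : R} (ha : P.degLT a m) (hb : P.degLT b m) (ha0 : a ≠ 0)
    (hb0 : b ≠ 0) : modr (a * b) ≠ 0 := by
  intro hab
  let K : Submodule R R := (Submodule.span R {f}).comap (LinearMap.mulRight R b)
  have mem_K (x : R) : x ∈ K ↔ modr (x * b) = 0 := by
    simp [K, Submodule.mem_span_singleton, P.modr_eq_zero_iff hσ hf hmodr]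
  have haK : a ∈ K := (mem_K a).mpr hab
  obtain ⟨g, hgK, hg0, hmin, -⟩ :=
    P.exists_generator hσ K ((Submodule.ne_bot_iff _).mpr ⟨a, haK, ha0⟩)
  have hgm : P.deg g < m :=
    (P.deg_le_of_generator hmin haK ha0).trans_lt (P.deg_lt_of_degLT ha0 ha)
  obtain ⟨u, w, hbez⟩ := P.exists_mul_add_mul_eq_one hσ hf hirr hb hb0
  obtain ⟨w', hw'⟩ := (P.modr_eq_zero_iff hσ hf hmodr).mp ((mem_K g).mp hgK)
  have hsurj (y : R) (hy : P.degLT y m) : ∃ x, P.degLT x (P.deg g) ∧ modr (x * b) = y := by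
    obtain ⟨q, r, hqr, hr⟩ := P.exists_eq_mul_add hσ hg0 (y * u)
    refine ⟨r, hr, P.modr_eq hσ hf hmodr (q := -(y * w) - q * w') ?_ hy⟩
    calc r * b = y * (u * b) - q * (g * b) := by rw [eq_sub_of_add_eq' hqr.symm]; noncomm_ring
      _ = y * (1 - w * f) - q * (w' * f) := by rw [eq_sub_of_add_eq hbez, ← hw']
      _ = (-(y * w) - q * w') * f + y := by noncomm_ring
  have hdim := P.eq_of_bijOn_degLT ((P.modrHom hσ hf hmodr).comp (AddMonoidHom.mulRight b))
    (fun s x => by simp [modrHom_apply, mul_assoc, P.modr_ι_mul hσ hf hmodr])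
    (fun x _ => (hmodr _).1) (fun x hx h0 => hmin x ((mem_K x).mpr h0) hx) hsurj
  omega

theorem modr_mul_left_cancel {a x y : R} (ha : P.degLT a m) (ha0 : a ≠ 0) (hx : P.degLT x m)
    (hy : P.degLT y m) (h : modr (a * x) = modr (a * y)) : x = y := by
  by_contra hxy
  refine P.modr_mul_ne_zero hσ hf hmodr hirr ha (P.degLT_sub hx hy) ha0 (sub_ne_zero.mpr hxy) ?_
  rw [mul_sub, P.modr_sub hσ hf hmodr, h, sub_self]

theorem modr_mul_right_cancel {a x y : R} (ha : P.degLT a m) (ha0 : a ≠ 0) (hx : P.degLT x m)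
    (hy : P.degLT y m) (h : modr (x * a) = modr (y * a)) : x = y := by
  by_contra hxy
  refine P.modr_mul_ne_zero hσ hf hmodr hirr (P.degLT_sub hx hy) ha (sub_ne_zero.mpr hxy) ha0 ?_
  rw [sub_mul, P.modr_sub hσ hf hmodr, h, sub_self]

theorem exists_modr_mul_right_eq {a y : R} (ha : P.degLT a m) (ha0 : a ≠ 0) (hy : P.degLT y m) :
    ∃ x, P.degLT x m ∧ modr (x * a) = y :=
  P.surjOn_degLT_of_injOn ((P.modrHom hσ hf hmodr).comp (AddMonoidHom.mulRight a))
    (fun s x => by simp [modrHom_apply, mul_assoc, P.modr_ι_mul hσ hf hmodr])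
    (fun x _ => (hmodr _).1)
    (fun x hx h0 => by_contra fun hx0 => P.modr_mul_ne_zero hσ hf hmodr hirr hx ha hx0 ha0 h0) hy

end Irreducible

include hσ hf in
/-- The Petit algebra `S_f`. -/
abbrev petitRing (hm : 0 < m) : NonAssocRing (P.degLTSubgroup m) where
  __ := (P.degLTSubgroup m).toAddCommGroup
  mul x y := ⟨modr (x * y), (hmodr _).1⟩
  one := ⟨1, P.degLT_one hm⟩
  left_distrib x y z := Subtype.ext (by
    show modr (x * (y + z)) = modr (x * y) + modr (x * z)
    rw [mul_add, P.modr_add hσ hf hmodr])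
  right_distrib x y z := Subtype.ext (by
    show modr ((x + y) * z) = modr (x * z) + modr (y * z)
    rw [add_mul, P.modr_add hσ hf hmodr])
  zero_mul x := Subtype.ext (by
    show modr (0 * x) = 0
    rw [zero_mul, P.modr_zero hσ hf hmodr])
  mul_zero x := Subtype.ext (by
    show modr (x * 0) = 0
    rw [mul_zero, P.modr_zero hσ hf hmodr])
  one_mul x := Subtype.ext (by
    show modr (1 * x) = x
    rw [one_mul, P.modr_of_degLT hσ hf hmodr x.2])
  mul_one x := Subtype.ext (by
    show modr (x * 1) = x
    rw [mul_one, P.modr_of_degLT hσ hf hmodr x.2])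

include hmodr in
theorem modr_mul_modr_of_mem_petitCenter {z x y : R} (hz : z ∈ P.petitCenter m modr)
    (hx : P.degLT x m) (hy : P.degLT y m) :
    modr (z * modr (x * y)) = modr (x * modr (z * y)) := by
  rw [hz.2.1 (modr (x * y)) (hmodr _).1, (hz.2.2 x y hx hy).2.2, ← hz.2.1 y hy]

include hσ hf hmodr hirr in
theorem petitRing_bijective_mul_right (hm : 0 < m) :
    letI := P.petitRing hσ hf hmodr hm
    ∀ c : P.degLTSubgroup m, c ≠ 0 → Function.Bijective (· * c) := by
  intro c hc
  have hc0 : (c : R) ≠ 0 := fun h => hc (Subtype.ext h)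
  refine ⟨fun x y h => Subtype.ext (P.modr_mul_right_cancel hσ hf hmodr hirr c.2 hc0 x.2 y.2
    (congrArg Subtype.val h)), fun y => ?_⟩
  obtain ⟨x, hx, hxy⟩ := P.exists_modr_mul_right_eq hσ hf hmodr hirr c.2 hc0 y.2
  exact ⟨⟨x, hx⟩, Subtype.ext hxy⟩

include hσ hf hmodr in
theorem petitRing_exists_centroidHom (hm : 0 < m) {z : R} (hz : z ∈ P.petitCenter m modr) :
    letI := P.petitRing hσ hf hmodr hm
    ∃ T : CentroidHom (P.degLTSubgroup m), ∀ x, (T x : R) = modr (z * x) := by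
  let _ := P.petitRing hσ hf hmodr hm
  refine ⟨{ toFun x := ⟨modr (z * x), (hmodr _).1⟩
            map_zero' := Subtype.ext ?_
            map_add' x y := Subtype.ext ?_
            map_mul_left' x y := Subtype.ext ?_
            map_mul_right' x y := Subtype.ext ?_ }, fun _ => rfl⟩
  · show modr (z * 0) = 0
    rw [mul_zero, P.modr_zero hσ hf hmodr]
  · show modr (z * (x + y)) = modr (z * x) + modr (z * y)
    rw [mul_add, P.modr_add hσ hf hmodr]
  · exact P.modr_mul_modr_of_mem_petitCenter hmodr hz x.2 y.2
  · exact ((hz.2.2 x y x.2 y.2).1).symm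

include hσ hf hmodr in
theorem petitRing_moduleFinite (hm : 0 < m)
    (hfd : ∃ (n : ℕ) (b : Fin n → R), (∀ i, P.degLT (b i) m) ∧
      ∀ x : R, P.degLT x m → ∃ c : Fin n → R,
        (∀ i, c i ∈ P.petitCenter m modr) ∧ x = ∑ i, modr (c i * b i)) :
    letI := P.petitRing hσ hf hmodr hm
    Module.Finite (CentroidHom (P.degLTSubgroup m)) (P.degLTSubgroup m) := by
  classical
  let _ := P.petitRing hσ hf hmodr hm
  obtain ⟨n, b, hb, hspan⟩ := hfd
  let b' (i : Fin n) : P.degLTSubgroup m := ⟨b i, hb i⟩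
  refine ⟨⟨Finset.univ.image b', eq_top_iff.mpr fun x _ => ?_⟩⟩
  obtain ⟨c, hc, hx⟩ := hspan x x.2
  choose T hT using fun i => P.petitRing_exists_centroidHom hσ hf hmodr hm (hc i)
  have hxT : x = ∑ i, T i • b' i := Subtype.ext (by
    rw [hx, AddSubgroup.val_finsetSum]
    simp [b', hT])
  rw [hxT]
  exact Submodule.sum_mem _ fun i _ => Submodule.smul_mem _ _ (Submodule.subset_span (by simp))

include hσ hf hmodr hirr in
theorem exists_modr_mul_left_eq (hm : 0 < m)
    (hfd : ∃ (n : ℕ) (b : Fin n → R), (∀ i, P.degLT (b i) m) ∧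
      ∀ x : R, P.degLT x m → ∃ c : Fin n → R,
        (∀ i, c i ∈ P.petitCenter m modr) ∧ x = ∑ i, modr (c i * b i))
    {a y : R} (ha : P.degLT a m) (ha0 : a ≠ 0) (hy : P.degLT y m) :
    ∃ x, P.degLT x m ∧ modr (a * x) = y := by
  let _ := P.petitRing hσ hf hmodr hm
  have := P.petitRing_moduleFinite hσ hf hmodr hm hfd
  obtain ⟨x, hx⟩ := mul_left_surjective_of_finite_centroidHom
    (P.petitRing_bijective_mul_right hσ hf hmodr hirr hm) (a := ⟨a, ha⟩)
    (fun h => ha0 (congrArg Subtype.val h)) ⟨y, hy⟩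
  exact ⟨x, x.2, congrArg Subtype.val hx⟩

end DivisionRing

end SkewPolyRing

theorem petit_division_iff_irreducible_general {S R : Type*} [DivisionRing S] [Ring R]
    (σ : S →+* S) (δ : S →+ S) (hσ : Function.Injective σ)
    (P : SkewPolyRing S R σ δ) (f : R) (m : ℕ) (hm : 2 ≤ m)
    (hf : P.MonicDeg f m) (modr : R → R) (hmodr : P.IsModr f m modr)
    -- `S_f` is finite-dimensional over its center `S₀`:
    (hfd : ∃ (n : ℕ) (b : Fin n → R), (∀ i, P.degLT (b i) m) ∧
      ∀ x : R, P.degLT x m → ∃ c : Fin n → R,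
        (∀ i, c i ∈ P.petitCenter m modr) ∧ x = ∑ i, modr (c i * b i)) :
    -- `S_f` is a division algebra ...
    (∀ a : R, P.degLT a m → a ≠ 0 → ∀ b : R, P.degLT b m →
        (∃! x : R, P.degLT x m ∧ modr (a * x) = b) ∧
        (∃! x : R, P.degLT x m ∧ modr (x * a) = b)) ↔
    -- ... if and only if `f` is irreducible in `S[t;σ,δ]`.
    (¬ IsUnit f ∧ ¬ ∃ g h : R, P.degLT g m ∧ P.degLT h m ∧ f = g * h) := by
  constructor
  · intro hdiv
    refine ⟨P.not_isUnit_of_monicDeg hσ hf (by omega), ?_⟩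
    rintro ⟨g, h, hg, hh, rfl⟩
    have hg0 : g ≠ 0 := by rintro rfl; exact P.ne_zero_of_monicDeg hf (zero_mul h)
    have hh0 : h ≠ 0 := by rintro rfl; exact P.ne_zero_of_monicDeg hf (mul_zero g)
    have hg_mul_zero : modr (g * 0) = 0 := by rw [mul_zero, P.modr_zero hσ hf hmodr]
    obtain ⟨x, -, huniq⟩ := (hdiv g hg hg0 0 (P.degLT_zero m)).1
    exact hh0 ((huniq h ⟨hh, P.modr_self hσ hf hmodr⟩).trans
      (huniq 0 ⟨P.degLT_zero m, hg_mul_zero⟩).symm)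
  · rintro ⟨-, hirr⟩ a ha ha0 b hb
    obtain ⟨x, hx, hxb⟩ := P.exists_modr_mul_left_eq hσ hf hmodr hirr (by omega) hfd ha ha0 hb
    obtain ⟨y, hy, hyb⟩ := P.exists_modr_mul_right_eq hσ hf hmodr hirr ha ha0 hb
    exact ⟨⟨x, ⟨hx, hxb⟩, fun x' ⟨hx', hx'b⟩ =>
        P.modr_mul_left_cancel hσ hf hmodr hirr ha ha0 hx' hx (hx'b.trans hxb.symm)⟩,
      ⟨y, ⟨hy, hyb⟩, fun y' ⟨hy', hy'b⟩ =>
        P.modr_mul_right_cancel hσ hf hmodr hirr ha ha0 hy' hy (hy'b.trans hyb.symm)⟩⟩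

/-- Let `S` be a division ring and `f ∈ S[t;σ,δ]` monic of degree `m ≥ 2` such that the
Petit algebra `S_f` is a finite-dimensional vector space over its center `S₀`.  Then `S_f`
is a division algebra (all left and right multiplications by nonzero elements are bijective)
if and only if `f` is irreducible in `S[t;σ,δ]`. -/
theorem petit_division_iff_irreducible {S R : Type*} [DivisionRing S] [Ring R]
    (σ : S →+* S) (δ : S →+ S) (hσ : Function.Injective σ)
    (hδ : ∀ a b : S, δ (a * b) = σ a * δ b + δ a * b)
    (P : SkewPolyRing S R σ δ) (f : R) (m : ℕ) (hm : 2 ≤ m)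
    (hf : P.MonicDeg f m) (modr : R → R) (hmodr : P.IsModr f m modr)
    -- `S_f` is finite-dimensional over its center `S₀`:
    (hfd : ∃ (n : ℕ) (b : Fin n → R), (∀ i, P.degLT (b i) m) ∧
      ∀ x : R, P.degLT x m → ∃ c : Fin n → R,
        (∀ i, c i ∈ P.petitCenter m modr) ∧ x = ∑ i, modr (c i * b i)) :
    -- `S_f` is a division algebra ...
    (∀ a : R, P.degLT a m → a ≠ 0 → ∀ b : R, P.degLT b m →
        (∃! x : R, P.degLT x m ∧ modr (a * x) = b) ∧
        (∃! x : R, P.degLT x m ∧ modr (x * a) = b)) ↔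
    -- ... if and only if `f` is irreducible in `S[t;σ,δ]`.
    (¬ IsUnit f ∧ ¬ ∃ g h : R, P.degLT g m ∧ P.degLT h m ∧ f = g * h) :=
  petit_division_iff_irreducible_general σ δ hσ P f m hm hf modr hmodr hfd
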